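/- arXiv:2306.12183 — 3 statements merged into one kernel-verified Lean document; each statement's English description precedes it below -/
import Mathlib

section
/- Assume that every 2×2 complex matrix satisfies the Crouzeix inequality. Then every rank-one n×n complex matrix satisfies the Crouzeix inequality. -/
open scoped ComplexInnerProductSpace

/-- The continuous linear map on Euclidean space induced by a square matrix. -/
noncomputable def matCLM {ι : Type} [Fintype ι] [DecidableEq ι] (A : Matrix ι ι ℂ) :
    EuclideanSpace ℂ ι →L[ℂ] EuclideanSpace ℂ ι :=
  Matrix.toEuclideanCLM (𝕜 := ℂ) A

/-- The numerical range of a square complex matrix. -/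
def numRange {ι : Type} [Fintype ι] [DecidableEq ι] (A : Matrix ι ι ℂ) : Set ℂ :=
  {z | ∃ x : EuclideanSpace ℂ ι, ‖x‖ = 1 ∧ z = ⟪x, matCLM A x⟫}

/-- A square complex matrix satisfies the Crouzeix inequality if for every polynomial `p`,
`‖p(A)‖ ≤ 2 * sup_{z ∈ W(A)} |p(z)|`. -/
def CrouzeixIneq {ι : Type} [Fintype ι] [DecidableEq ι] (A : Matrix ι ι ℂ) : Prop :=
  ∀ p : Polynomial ℂ,
    ‖matCLM (Polynomial.aeval A p)‖ ≤ 2 * ⨆ z ∈ numRange A, ‖Polynomial.eval z p‖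

/-!
If `T` has rank one, then `range T ⊔ range T†` has dimension at most two, so there is an isometry
`V : ℂ² → ℂⁿ` whose range contains it, and `T = V B V†` with `B = V† T V`. Because `V† V = 1`,
`p(T) = V p(B) V† + p(0) (1 - V V†)`, an orthogonal sum, so `‖p(T)‖ ≤ max ‖p(B)‖ |p(0)|`.
Now `W(B) ⊆ W(T)` since `⟪x, B x⟫ = ⟪V x, T (V x)⟫`, and `0 ∈ W(T)` since `T` is singular for
`n ≥ 2`; both terms are therefore bounded by `2 sup_{W(T)} |p|`. For `n = 1`, `T` is a scalar.
-/

open Polynomial Module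
open scoped InnerProductSpace

theorem Submodule.exists_le_finrank_eq {K V : Type*} [DivisionRing K] [AddCommGroup V]
    [Module K V] [Module.Finite K V] (p : Submodule K V) {k : ℕ} (hpk : finrank K p ≤ k)
    (hk : k ≤ finrank K V) : ∃ q : Submodule K V, p ≤ q ∧ finrank K q = k := by
  obtain ⟨m, rfl⟩ := Nat.exists_eq_add_of_le hpk
  induction m with
  | zero => exact ⟨p, le_rfl, rfl⟩
  | succ m ih =>
    obtain ⟨q, hpq, hq⟩ := ih (by omega) (by omega)
    have hq_ne_top : q ≠ ⊤ := fun h => by rw [h, finrank_top] at hq; omega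
    obtain ⟨v, -, hv⟩ := SetLike.exists_of_lt (lt_top_iff_ne_top.mpr hq_ne_top)
    exact ⟨q ⊔ K ∙ v, hpq.trans le_sup_left, by rw [finrank_sup_span_singleton hv, hq]; rfl⟩

theorem Submodule.exists_linearIsometry_le_range {𝕜 E : Type*} [RCLike 𝕜] [NormedAddCommGroup E]
    [InnerProductSpace 𝕜 E] [FiniteDimensional 𝕜 E] (K : Submodule 𝕜 E)
    {k : ℕ} (hK : finrank 𝕜 K ≤ k) (hk : k ≤ finrank 𝕜 E) :
    ∃ V : EuclideanSpace 𝕜 (Fin k) →ₗᵢ[𝕜] E, K ≤ LinearMap.range V.toLinearMap := by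
  obtain ⟨L, hKL, hL⟩ := K.exists_le_finrank_eq hK hk
  let b := (stdOrthonormalBasis 𝕜 L).reindex (finCongr hL)
  refine ⟨L.subtypeₗᵢ.comp b.repr.symm.toLinearIsometry, fun x hx => ⟨b.repr ⟨x, hKL hx⟩, ?_⟩⟩
  simp

namespace ContinuousLinearMap

theorem aeval_comp_comp_of_comp_eq_one {𝕜 E F : Type*} [NormedField 𝕜] [NormedAddCommGroup E]
    [NormedSpace 𝕜 E] [NormedAddCommGroup F] [NormedSpace 𝕜 F] (V : F →L[𝕜] E) (W : E →L[𝕜] F)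
    (hWV : W ∘L V = 1) (S : F →L[𝕜] F) (p : 𝕜[X]) :
    aeval (V ∘L S ∘L W) p = V ∘L aeval S p ∘L W + p.eval 0 • (1 - V ∘L W) := by
  have hWV' (y : F) : W (V y) = y := congr($hWV y)
  have hpow (k : ℕ) : (V ∘L S ∘L W) ^ (k + 1) = V ∘L (S ^ (k + 1)) ∘L W := by
    induction k with
    | zero => simp
    | succ k ih =>
      ext x
      simp [pow_succ _ (k + 1), ih, hWV']
  induction p using Polynomial.induction_on' with
  | add p q hp hq => rw [map_add, hp, hq, eval_add, add_smul, map_add, add_comp, comp_add]; abel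
  | monomial k a =>
    cases k with
    | zero => ext x; simp [← smul_add]
    | succ k => simp [hpow, ← Algebra.smul_def]

section Adjoint

variable {𝕜 E F G : Type*} [RCLike 𝕜] [NormedAddCommGroup E] [InnerProductSpace 𝕜 E]
  [CompleteSpace E] [NormedAddCommGroup F] [InnerProductSpace 𝕜 F] [CompleteSpace F]
  [NormedAddCommGroup G] [InnerProductSpace 𝕜 G]
  {V : F →L[𝕜] E}

theorem adjoint_apply_apply_of_adjoint_comp_eq_one (hV : adjoint V ∘L V = 1) (y : F) :
    adjoint V (V y) = y :=
  congr($hV y)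

theorem comp_adjoint_comp_eq_of_range_le (hV : adjoint V ∘L V = 1) {T : G →L[𝕜] E}
    (hT : T.range ≤ V.range) : V ∘L adjoint V ∘L T = T := by
  ext x
  obtain ⟨y, hy : V y = T x⟩ := hT ⟨x, rfl⟩
  rw [comp_apply, comp_apply, ← hy, adjoint_apply_apply_of_adjoint_comp_eq_one hV]

theorem compression_eq_of_range_le (hV : adjoint V ∘L V = 1) {T : E →L[𝕜] E}
    (hT : T.range ≤ V.range) (hT' : (adjoint T).range ≤ V.range) :
    V ∘L (adjoint V ∘L T ∘L V) ∘L adjoint V = T := by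
  have hright : T ∘L V ∘L adjoint V = T := by
    simpa [adjoint_comp, comp_assoc] using congr(adjoint $(comp_adjoint_comp_eq_of_range_le hV hT'))
  calc V ∘L (adjoint V ∘L T ∘L V) ∘L adjoint V = (V ∘L adjoint V ∘L T) ∘L V ∘L adjoint V := by
        simp only [comp_assoc]
    _ = T := by rw [comp_adjoint_comp_eq_of_range_le hV hT, hright]

theorem inner_apply_sub_apply_adjoint_apply_eq_zero (hV : adjoint V ∘L V = 1) (y : F) (x : E) :
    ⟪V y, x - V (adjoint V x)⟫_𝕜 = 0 := by
  rw [← adjoint_inner_right, map_sub, adjoint_apply_apply_of_adjoint_comp_eq_one hV, sub_self,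
    inner_zero_right]

theorem norm_comp_comp_adjoint_add_smul_le (hV : adjoint V ∘L V = 1) (M : F →L[𝕜] F) (c : 𝕜) :
    ‖V ∘L M ∘L adjoint V + c • (1 - V ∘L adjoint V)‖ ≤ max ‖M‖ ‖c‖ := by
  have hVnorm (y : F) : ‖V y‖ = ‖y‖ := (norm_map_iff_adjoint_comp_self V).mpr hV y
  refine opNorm_le_bound _ (by positivity) fun x => ?_
  set m := max ‖M‖ ‖c‖
  set y := adjoint V x
  have hx : ‖x‖ ^ 2 = ‖y‖ ^ 2 + ‖x - V y‖ ^ 2 := by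
    rw [sq, sq, sq, ← hVnorm, ← norm_add_sq_eq_norm_sq_add_norm_sq_of_inner_eq_zero _ _
      (inner_apply_sub_apply_adjoint_apply_eq_zero hV _ x), add_sub_cancel]
  have hsplit : ‖V (M y) + c • (x - V y)‖ ^ 2 = ‖M y‖ ^ 2 + ‖c‖ ^ 2 * ‖x - V y‖ ^ 2 := by
    rw [sq, norm_add_sq_eq_norm_sq_add_norm_sq_of_inner_eq_zero _ _ (by
      rw [inner_smul_right, inner_apply_sub_apply_adjoint_apply_eq_zero hV, mul_zero]), hVnorm,
      norm_smul]
    ring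
  have hM : ‖M y‖ ≤ m * ‖y‖ := (M.le_opNorm _).trans (by gcongr; exact le_max_left _ _)
  have hc : ‖c‖ ≤ m := le_max_right _ _
  refine le_of_sq_le_sq ?_ (by positivity)
  calc ‖(V ∘L M ∘L adjoint V + c • (1 - V ∘L adjoint V)) x‖ ^ 2
      = ‖M y‖ ^ 2 + ‖c‖ ^ 2 * ‖x - V y‖ ^ 2 := by simpa using hsplit
    _ ≤ (m * ‖y‖) ^ 2 + m ^ 2 * ‖x - V y‖ ^ 2 := by gcongr
    _ = (m * ‖x‖) ^ 2 := by rw [mul_pow, mul_pow, hx]; ring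

end Adjoint

end ContinuousLinearMap

section Matrix

open ContinuousLinearMap
open scoped Matrix

variable {ι κ : Type} [Fintype ι] [DecidableEq ι] [Fintype κ] [DecidableEq κ]

theorem matCLM_aeval (A : Matrix ι ι ℂ) (p : ℂ[X]) :
    matCLM (aeval A p) = aeval (matCLM A) p :=
  (aeval_algHom_apply (Matrix.toEuclideanCLM (𝕜 := ℂ)) A p).symm

theorem adjoint_matCLM (A : Matrix ι ι ℂ) : adjoint (matCLM A) = matCLM Aᴴ :=
  (map_star (Matrix.toEuclideanCLM (𝕜 := ℂ)) A).symm

theorem finrank_range_matCLM (A : Matrix ι ι ℂ) : finrank ℂ (matCLM A).range = A.rank :=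
  (A.rank_eq_finrank_range_toLin (EuclideanSpace.basisFun ι ℂ).toBasis
    (EuclideanSpace.basisFun ι ℂ).toBasis).symm

open scoped ComplexOrder in
theorem finrank_range_adjoint_matCLM (A : Matrix ι ι ℂ) :
    finrank ℂ (adjoint (matCLM A)).range = A.rank := by
  rw [adjoint_matCLM, finrank_range_matCLM, Matrix.rank_conjTranspose]

theorem norm_le_of_mem_numRange {A : Matrix ι ι ℂ} {z : ℂ} (hz : z ∈ numRange A) :
    ‖z‖ ≤ ‖matCLM A‖ := by
  obtain ⟨x, hx, rfl⟩ := hz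
  simpa [hx] using (norm_inner_le_norm x (matCLM A x)).trans
    (mul_le_mul_of_nonneg_left ((matCLM A).le_opNorm x) (norm_nonneg x))

theorem norm_eval_le_iSup_numRange {A : Matrix ι ι ℂ} (p : ℂ[X]) {z : ℂ} (hz : z ∈ numRange A) :
    ‖p.eval z‖ ≤ ⨆ z ∈ numRange A, ‖p.eval z‖ := by
  refine le_ciSup₂ (f := fun z (_ : z ∈ numRange A) => ‖p.eval z‖) ?_ z hz
  obtain ⟨C, hC⟩ := (isCompact_closedBall (0 : ℂ) ‖matCLM A‖).exists_bound_of_continuousOn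
    p.continuous.norm.continuousOn
  refine ⟨C, ?_⟩
  simp only [mem_upperBounds, Set.mem_iUnion, Set.mem_range]
  rintro _ ⟨w, hw, rfl⟩
  simpa using hC w (mem_closedBall_zero_iff.mpr (norm_le_of_mem_numRange hw))

theorem iSup_numRange_mono {A : Matrix ι ι ℂ} {B : Matrix κ κ ℂ} (h : numRange B ⊆ numRange A)
    (p : ℂ[X]) : ⨆ z ∈ numRange B, ‖p.eval z‖ ≤ ⨆ z ∈ numRange A, ‖p.eval z‖ := by
  have hnonneg : 0 ≤ ⨆ z ∈ numRange A, ‖p.eval z‖ :=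
    Real.iSup_nonneg fun _ => Real.iSup_nonneg fun _ => norm_nonneg _
  exact Real.iSup_le (fun z => Real.iSup_le (fun hz => norm_eval_le_iSup_numRange p (h hz))
    hnonneg) hnonneg

theorem numRange_subset_of_eq_adjoint_comp_comp {A : Matrix ι ι ℂ} {B : Matrix κ κ ℂ}
    {V : EuclideanSpace ℂ κ →L[ℂ] EuclideanSpace ℂ ι} (hV : adjoint V ∘L V = 1)
    (hB : matCLM B = adjoint V ∘L matCLM A ∘L V) : numRange B ⊆ numRange A := by
  rintro _ ⟨x, hx, rfl⟩
  refine ⟨V x, by rw [(V.norm_map_iff_adjoint_comp_self).mpr hV, hx], ?_⟩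
  rw [hB, comp_apply, comp_apply, adjoint_inner_right]

theorem zero_mem_numRange_of_rank_lt {A : Matrix ι ι ℂ} (hA : A.rank < Fintype.card ι) :
    0 ∈ numRange A := by
  have hdet : A.det = 0 := by
    by_contra h
    exact hA.ne (A.rank_of_det_ne_zero h)
  obtain ⟨v, hv, hAv⟩ := Matrix.exists_mulVec_eq_zero_iff.mpr hdet
  have hv' : WithLp.toLp 2 v ≠ 0 := by simpa using hv
  refine ⟨(‖WithLp.toLp 2 v‖⁻¹ : ℂ) • WithLp.toLp 2 v, norm_smul_inv_norm hv', ?_⟩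
  simp [matCLM, hAv]

theorem CrouzeixIneq.of_compression {A : Matrix ι ι ℂ} {B : Matrix κ κ ℂ}
    {V : EuclideanSpace ℂ κ →L[ℂ] EuclideanSpace ℂ ι} (hV : adjoint V ∘L V = 1)
    (hAB : matCLM A = V ∘L matCLM B ∘L adjoint V) (h0 : 0 ∈ numRange A) (hB : CrouzeixIneq B) :
    CrouzeixIneq A := by
  intro p
  have hBA : matCLM B = adjoint V ∘L matCLM A ∘L V := by
    rw [hAB]
    ext x
    simp [adjoint_apply_apply_of_adjoint_comp_eq_one hV]
  have hsup := iSup_numRange_mono (numRange_subset_of_eq_adjoint_comp_comp hV hBA) p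
  have hp0 := norm_eval_le_iSup_numRange p h0
  calc ‖matCLM (aeval A p)‖
      = ‖V ∘L matCLM (aeval B p) ∘L adjoint V + p.eval 0 • (1 - V ∘L adjoint V)‖ := by
        rw [matCLM_aeval, hAB, aeval_comp_comp_of_comp_eq_one _ _ hV, matCLM_aeval]
    _ ≤ max ‖matCLM (aeval B p)‖ ‖p.eval 0‖ := norm_comp_comp_adjoint_add_smul_le hV _ _
    _ ≤ 2 * ⨆ z ∈ numRange A, ‖p.eval z‖ :=
        max_le ((hB p).trans (by linarith)) (by linarith [(norm_nonneg _).trans hp0])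

theorem crouzeixIneq_algebraMap [Nonempty ι] (c : ℂ) :
    CrouzeixIneq (algebraMap ℂ (Matrix ι ι ℂ) c) := by
  intro p
  have hc : c ∈ numRange (algebraMap ℂ (Matrix ι ι ℂ) c) := by
    obtain ⟨i⟩ := ‹Nonempty ι›
    refine ⟨EuclideanSpace.single i 1, by simp, ?_⟩
    simp [matCLM, Algebra.algebraMap_eq_smul_one]
  have hsup := norm_eval_le_iSup_numRange p hc
  calc ‖matCLM (aeval (algebraMap ℂ (Matrix ι ι ℂ) c) p)‖ ≤ ‖p.eval c‖ := by
        rw [aeval_algebraMap_apply, matCLM, AlgHomClass.commutes, Algebra.algebraMap_eq_smul_one,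
          coe_aeval_eq_eval]
        exact (norm_smul_le _ _).trans (mul_le_of_le_one_right (norm_nonneg _) norm_id_le)
    _ ≤ 2 * ⨆ z ∈ numRange (algebraMap ℂ (Matrix ι ι ℂ) c), ‖p.eval z‖ := by
        linarith [(norm_nonneg _).trans hsup]

end Matrix

/-- If every `2 × 2` complex matrix satisfies the Crouzeix inequality, then every rank-one
`n × n` complex matrix satisfies the Crouzeix inequality. -/
theorem crouzeix_rank_one (h2 : ∀ B : Matrix (Fin 2) (Fin 2) ℂ, CrouzeixIneq B)
    {n : ℕ} (A : Matrix (Fin n) (Fin n) ℂ) (hA : A.rank = 1) :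
    CrouzeixIneq A := by
  have hn_pos : 1 ≤ n := by simpa [hA] using A.rank_le_card_width
  obtain rfl | hn : n = 1 ∨ 2 ≤ n := by omega
  · have hscalar : A = algebraMap ℂ _ (A 0 0) := by
      ext i j
      simp [Subsingleton.elim i 0, Subsingleton.elim j 0, Matrix.algebraMap_matrix_apply]
    rw [hscalar]
    exact crouzeixIneq_algebraMap _
  set T := matCLM A
  have hK : finrank ℂ ↥(T.range ⊔ (ContinuousLinearMap.adjoint T).range) ≤ 2 := by
    refine (Submodule.finrank_add_le_finrank_add_finrank _ _).trans ?_
    rw [finrank_range_adjoint_matCLM, finrank_range_matCLM, hA]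
  obtain ⟨V, hV⟩ := Submodule.exists_linearIsometry_le_range _ hK (by simpa using hn)
  have hVV := V.adjoint_comp_self
  set V' := V.toContinuousLinearMap
  obtain ⟨B, hB⟩ : ∃ B : Matrix (Fin 2) (Fin 2) ℂ,
      matCLM B = ContinuousLinearMap.adjoint V' ∘L T ∘L V' :=
    ⟨_, (Matrix.toEuclideanCLM (𝕜 := ℂ)).apply_symm_apply _⟩
  refine CrouzeixIneq.of_compression hVV ?_ (zero_mem_numRange_of_rank_lt (by simp [hA]; omega))
    (h2 B)
  rw [hB]
  exact (ContinuousLinearMap.compression_eq_of_range_le hVV (le_sup_left.trans hV)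
    (le_sup_right.trans hV)).symm
end

section
/- If every cyclic square complex matrix (of every size) satisfies the Crouzeix inequality, then every square complex matrix satisfies the Crouzeix inequality. -/
open scoped ComplexInnerProductSpace

/-- A square matrix is cyclic if some vector `y` has cyclic subspace
`span {y, Ay, A²y, …}` equal to the whole space. -/
def MatCyclic {ι : Type} [Fintype ι] [DecidableEq ι] (A : Matrix ι ι ℂ) : Prop :=
  ∃ y : ι → ℂ, Submodule.span ℂ (Set.range fun k : ℕ => (A ^ k).mulVec y) = ⊤

/-!
For a fixed polynomial `p`, the inequality `‖p(A)‖ ≤ 2 sup_{W(A)} |p|` is a closed condition on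
`A`: `A ↦ ‖p(A)‖` is continuous, and so is `A ↦ sup_{‖x‖ = 1} |p(⟪x, A x⟫)|`, a supremum over the
compact unit sphere of a jointly continuous function. It therefore suffices that cyclic matrices
are dense. On the line `A + t (D - A)` towards `D = diag(0, 1, …, n - 1)`, the determinant of the
Krylov matrix `[y, My, …, M^(n-1) y]` with `y = (1, …, 1)` is a polynomial in `t`; at `t = 1` it is
a nonzero Vandermonde determinant, so it vanishes for only finitely many `t`, and `A` is a limit of
cyclic matrices.
-/

open Polynomial Matrix Metric

section NumericalRange

variable {ι : Type} [Fintype ι] [DecidableEq ι]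

@[fun_prop]
theorem continuous_matCLM : Continuous (matCLM : Matrix ι ι ℂ → _) :=
  LinearMap.continuous_of_finiteDimensional
    (Matrix.toEuclideanCLM (𝕜 := ℂ) (n := ι)).toAlgEquiv.toLinearMap

theorem numRange_eq_image (M : Matrix ι ι ℂ) :
    numRange M = (fun x => ⟪x, matCLM M x⟫) '' sphere 0 1 := by
  ext z
  simp [numRange, eq_comm]

theorem iSup_numRange_eq_sSup (M : Matrix ι ι ℂ) {f : ℂ → ℝ} (hf : Continuous f)
    (hf₀ : ∀ z, 0 ≤ f z) :
    ⨆ z ∈ numRange M, f z = sSup ((fun x => f ⟪x, matCLM M x⟫) '' sphere 0 1) := by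
  have hbdd : BddAbove (f '' numRange M) := by
    rw [numRange_eq_image, Set.image_image]
    exact (isCompact_sphere 0 1).bddAbove_image (by fun_prop)
  rw [← csSup_image (by rwa [← Set.image_eq_range]), numRange_eq_image, Set.image_image]
  -- the junk value `sSup ∅ = 0` is harmless because `f` is nonnegative
  rw [Real.sSup_empty]
  exact Real.iSup_nonneg fun _ => hf₀ _

theorem continuous_iSup_numRange {f : ℂ → ℝ} (hf : Continuous f) (hf₀ : ∀ z, 0 ≤ f z) :
    Continuous fun M : Matrix ι ι ℂ => ⨆ z ∈ numRange M, f z := by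
  simp_rw [iSup_numRange_eq_sSup _ hf hf₀]
  exact (isCompact_sphere 0 1).continuous_sSup (by fun_prop)

theorem isClosed_setOf_crouzeixIneq : IsClosed {M : Matrix ι ι ℂ | CrouzeixIneq M} := by
  simp only [CrouzeixIneq, Set.ofPred_forall]
  refine isClosed_iInter fun p => isClosed_le ?_ ?_
  · exact continuous_norm.comp (continuous_matCLM.comp p.continuous_aeval)
  · exact continuous_const.mul
      (continuous_iSup_numRange (continuous_norm.comp p.continuous) fun _ => norm_nonneg _)

end NumericalRange

section Krylov

variable {n : ℕ} {R : Type*} [CommRing R]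

def krylov (M : Matrix (Fin n) (Fin n) R) (y : Fin n → R) : Matrix (Fin n) (Fin n) R :=
  .of fun i k => (M ^ (k : ℕ) *ᵥ y) i

theorem krylov_mulVec (M : Matrix (Fin n) (Fin n) R) (y w : Fin n → R) :
    krylov M y *ᵥ w = ∑ k, w k • (M ^ (k : ℕ) *ᵥ y) := by
  ext i
  simp [krylov, mulVec, dotProduct, Finset.sum_apply, mul_comm]

theorem krylov_map {S : Type*} [CommRing S] (f : R →+* S) (M : Matrix (Fin n) (Fin n) R)
    (y : Fin n → R) : krylov (M.map f) (f ∘ y) = (krylov M y).map f := by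
  ext i k
  simp [krylov, ← Matrix.map_pow, RingHom.map_mulVec]

theorem krylov_diagonal_one (v : Fin n → R) : krylov (diagonal v) 1 = vandermonde v := by
  ext i k
  simp [krylov, diagonal_pow, vandermonde_apply, mulVec_diagonal]

theorem exists_eval_eq_det_krylov_add_smul (A E : Matrix (Fin n) (Fin n) R) (y : Fin n → R) :
    ∃ q : R[X], ∀ t, q.eval t = (krylov (A + t • E) y).det := by
  refine ⟨(krylov (A.map C + (X : R[X]) • E.map C) (C ∘ y)).det, fun t => ?_⟩
  have hline : (A.map C + (X : R[X]) • E.map C).map (eval t) = A + t • E := by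
    ext i j
    simp only [map_apply, Matrix.add_apply, Matrix.smul_apply, smul_eq_mul, eval_add, eval_mul,
      eval_X, eval_C]
  have hy : evalRingHom t ∘ C ∘ y = y := by
    ext i
    simp
  rw [← coe_evalRingHom, RingHom.map_det, RingHom.mapMatrix_apply, ← krylov_map, hy,
    coe_evalRingHom, hline]

end Krylov

theorem matCyclic_of_det_krylov_ne_zero {n : ℕ} {M : Matrix (Fin n) (Fin n) ℂ} {y : Fin n → ℂ}
    (h : (krylov M y).det ≠ 0) : MatCyclic M := by
  refine ⟨y, eq_top_iff.mpr fun v _ => ?_⟩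
  have hv : v = krylov M y *ᵥ ((krylov M y)⁻¹ *ᵥ v) := by
    rw [mulVec_mulVec, mul_nonsing_inv _ (isUnit_iff_ne_zero.mpr h), one_mulVec]
  rw [hv, krylov_mulVec]
  exact Submodule.sum_mem _ fun k _ =>
    Submodule.smul_mem _ _ (Submodule.subset_span ⟨(k : ℕ), rfl⟩)

theorem dense_setOf_matCyclic (n : ℕ) : Dense {M : Matrix (Fin n) (Fin n) ℂ | MatCyclic M} := by
  intro A
  set D : Matrix (Fin n) (Fin n) ℂ := diagonal fun i => (i : ℂ)
  obtain ⟨q, hq⟩ := exists_eval_eq_det_krylov_add_smul A (D - A) 1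
  have hq₁ : q.eval 1 ≠ 0 := by
    rw [hq, one_smul, add_sub_cancel, krylov_diagonal_one, det_vandermonde_ne_zero_iff]
    exact Nat.cast_injective.comp Fin.val_injective
  have hdense : Dense {t : ℂ | q.eval t ≠ 0} :=
    (finite_setOfPred_isRoot fun h0 => hq₁ (by simp [h0])).countable.dense_compl ℂ
  have hA := map_mem_closure (t := {M | MatCyclic M}) (f := fun t : ℂ => A + t • (D - A))
    (by fun_prop) (hdense 0) fun t ht => matCyclic_of_det_krylov_ne_zero (by rwa [← hq])
  simpa only [zero_smul, add_zero] using hA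

/-- If every cyclic square complex matrix satisfies the Crouzeix inequality, then every
square complex matrix satisfies the Crouzeix inequality. -/
theorem crouzeix_of_cyclic
    (h : ∀ (n : ℕ) (B : Matrix (Fin n) (Fin n) ℂ), MatCyclic B → CrouzeixIneq B) :
    ∀ (n : ℕ) (A : Matrix (Fin n) (Fin n) ℂ), CrouzeixIneq A :=
  fun n A => closure_minimal (h n) isClosed_setOf_crouzeixIneq (dense_setOf_matCyclic n A)
end

section
/- Assume that every 1×1 and every 2×2 complex matrix satisfies the Crouzeix inequality. Let A be an n×n complex matrix with A² = 0. Then A satisfies the Crouzeix inequality. -/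
/-!
Since `A² = 0`, `p(A) = p(0) • 1 + p'(0) • A`. For a unit vector `x` put `s = ‖A x‖` and
`a = ‖A‖`. Splitting `x` along `A x`, which lies in `ker A`, gives
`|⟪x, A x⟫| ≤ s √(1 - s²/a²)`, and a unit vector `y` for the block `B = !![0, a; 0, 0]` realises
`‖B y‖ = s` and `⟪y, B y⟫` of this modulus with any phase. Expanding `‖c x + d A x‖²` then gives
`‖p(A)‖ ≤ ‖p(B)‖`. A norm-attaining unit vector `e` of `A` has `⟪e, A e⟫ = 0` by the same bound,
so `e` and `A e / a` are orthonormal and span a copy of `B` inside `A`, whence `W(B) ⊆ W(A)`.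
Crouzeix's inequality for `B` finishes the proof.
-/

open scoped ComplexInnerProductSpace

open ComplexConjugate

theorem Complex.exists_norm_eq_one_mul_eq_norm (k : ℂ) : ∃ ω : ℂ, ‖ω‖ = 1 ∧ k * ω = ‖k‖ := by
  refine ⟨exp (-(k.arg : ℂ) * I), by simpa using norm_exp_ofReal_mul_I (-k.arg), ?_⟩
  nth_rewrite 1 [← norm_mul_exp_arg_mul_I k]
  rw [mul_assoc, ← exp_add, ← add_mul, add_neg_cancel, zero_mul, exp_zero, mul_one]

section InnerProductSpace

variable {𝕜 E : Type*} [RCLike 𝕜] [NormedAddCommGroup E] [InnerProductSpace 𝕜 E]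

theorem norm_smul_add_smul_sq (c d : 𝕜) (x w : E) :
    ‖c • x + d • w‖ ^ 2 =
      ‖c‖ ^ 2 * ‖x‖ ^ 2 + 2 * RCLike.re (conj c * d * inner 𝕜 x w) + ‖d‖ ^ 2 * ‖w‖ ^ 2 := by
  rw [@norm_add_sq 𝕜, inner_smul_left, inner_smul_right, norm_smul, norm_smul, mul_pow,
    mul_pow, mul_assoc]

-- When `‖T‖ = 0` the quotient is `0` by convention; the bound still holds since then `T x = 0`.
theorem norm_inner_map_self_le_of_map_map_eq_zero (T : E →L[𝕜] E) {x : E} (hx : ‖x‖ = 1)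
    (hTTx : T (T x) = 0) :
    ‖inner 𝕜 x (T x)‖ ≤ ‖T x‖ * √(1 - (‖T x‖ / ‖T‖) ^ 2) := by
  set K := 𝕜 ∙ T x
  set u : E := K.starProjection x
  set v : E := x - u
  have hu : T u = 0 := by
    obtain ⟨r, hr⟩ := Submodule.mem_span_singleton.mp (K.starProjection_apply_mem x)
    rw [show u = r • T x from hr.symm, map_smul, hTTx, smul_zero]
  have hv : v ∈ Kᗮ := K.sub_starProjection_mem_orthogonal x
  have hxuv : x = u + v := (add_sub_cancel u x).symm
  have huv : inner 𝕜 u v = 0 :=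
    Submodule.inner_right_of_mem_orthogonal (K.starProjection_apply_mem x) hv
  have hpyth : ‖u‖ ^ 2 + ‖v‖ ^ 2 = 1 := by
    rw [← one_pow 2, ← hx, hxuv, @norm_add_sq 𝕜, huv, map_zero, mul_zero, add_zero]
  have hTx : T x = T v := by rw [hxuv, map_add, hu, zero_add]
  have hinner : inner 𝕜 x (T x) = inner 𝕜 u (T x) := by
    rw [← add_zero (inner 𝕜 u (T x)), ← Submodule.inner_left_of_mem_orthogonal
      (Submodule.mem_span_singleton_self _) hv, ← inner_add_left, ← hxuv]
  have hvT : ‖T x‖ / ‖T‖ ≤ ‖v‖ := div_le_of_le_mul₀ (norm_nonneg _) (norm_nonneg _)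
    (hTx ▸ (T.le_opNorm v).trans_eq (mul_comm _ _))
  have hu_le : ‖u‖ ≤ √(1 - (‖T x‖ / ‖T‖) ^ 2) :=
    Real.le_sqrt_of_sq_le (by nlinarith [div_nonneg (norm_nonneg (T x)) (norm_nonneg T)])
  calc ‖inner 𝕜 x (T x)‖ = ‖inner 𝕜 u (T x)‖ := by rw [hinner]
    _ ≤ ‖u‖ * ‖T x‖ := norm_inner_le_norm _ _
    _ ≤ √(1 - (‖T x‖ / ‖T‖) ^ 2) * ‖T x‖ := by gcongr
    _ = _ := mul_comm _ _

theorem exists_norm_eq_one_norm_map_eq_opNorm [FiniteDimensional 𝕜 E] [Nontrivial E]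
    (T : E →L[𝕜] E) : ∃ e : E, ‖e‖ = 1 ∧ ‖T e‖ = ‖T‖ := by
  have := FiniteDimensional.proper_rclike 𝕜 E
  let _ := NormedSpace.restrictScalars ℝ 𝕜 E
  obtain ⟨e, he, hmax⟩ := (isCompact_sphere (0 : E) 1).exists_isMaxOn
    (NormedSpace.sphere_nonempty.mpr zero_le_one) T.continuous.norm.continuousOn
  rw [mem_sphere_zero_iff_norm] at he
  refine ⟨e, he, le_antisymm (by simpa [he] using T.le_opNorm e) ?_⟩
  exact T.opNorm_le_of_unit_norm (norm_nonneg _) fun x hx => hmax (mem_sphere_zero_iff_norm.mpr hx)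

end InnerProductSpace

def nilBlock (a : ℝ) : Matrix (Fin 2) (Fin 2) ℂ := !![0, (a : ℂ); 0, 0]

theorem nilBlock_sq (a : ℝ) : nilBlock a ^ 2 = 0 := by
  ext i j
  fin_cases i <;> fin_cases j <;> simp [nilBlock, sq, Matrix.mul_apply]

theorem matCLM_nilBlock_apply (a : ℝ) (y : EuclideanSpace ℂ (Fin 2)) :
    matCLM (nilBlock a) y = WithLp.toLp 2 ![a * y 1, 0] := by
  ext i
  fin_cases i <;> simp [matCLM, nilBlock, Matrix.mulVec, dotProduct, Fin.sum_univ_two]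

theorem inner_matCLM_nilBlock (a : ℝ) (y : EuclideanSpace ℂ (Fin 2)) :
    ⟪y, matCLM (nilBlock a) y⟫ = conj (y 0) * (a * y 1) := by
  simp [matCLM_nilBlock_apply, PiLp.inner_apply, Fin.sum_univ_two, mul_comm]

theorem exists_inner_matCLM_nilBlock_eq {a s : ℝ} (hs : 0 ≤ s) (hsa : s ≤ a) {ω : ℂ}
    (hω : ‖ω‖ = 1) : ∃ y : EuclideanSpace ℂ (Fin 2), ‖y‖ = 1 ∧
      ‖matCLM (nilBlock a) y‖ = s ∧ ⟪y, matCLM (nilBlock a) y⟫ = ω * (s * √(1 - (s / a) ^ 2)) := by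
  set v := s / a
  have hv0 : 0 ≤ v := div_nonneg hs (hs.trans hsa)
  have hv1 : v ≤ 1 := div_le_one_of_le₀ hsa (hs.trans hsa)
  have hav : a * v = s := by
    rcases (hs.trans hsa).eq_or_lt with rfl | ha
    · simp [le_antisymm hsa hs]
    · exact mul_div_cancel₀ s ha.ne'
  have hu : √(1 - v ^ 2) ^ 2 = 1 - v ^ 2 := Real.sq_sqrt (by nlinarith)
  refine ⟨WithLp.toLp 2 ![conj ω * √(1 - v ^ 2), v], ?_, ?_, ?_⟩
  · rw [EuclideanSpace.norm_eq, Fin.sum_univ_two]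
    simp [hω, abs_of_nonneg hv0, hu]
  · rw [matCLM_nilBlock_apply, EuclideanSpace.norm_eq, Fin.sum_univ_two]
    simp [← Complex.ofReal_mul, hav, Real.sqrt_sq hs]
  · rw [inner_matCLM_nilBlock]
    simp only [Matrix.cons_val_zero, Matrix.cons_val_one, map_mul,
      Complex.conj_conj, Complex.conj_ofReal, ← hav]
    push_cast
    ring

section ComplexInnerProductSpace

variable {E : Type*} [NormedAddCommGroup E] [InnerProductSpace ℂ E]

theorem norm_smul_one_add_smul_apply_le_nilBlock (T : E →L[ℂ] E) {x : E} (hx : ‖x‖ = 1)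
    (hTTx : T (T x) = 0) (c d : ℂ) :
    ‖(c • 1 + d • T) x‖ ≤ ‖c • 1 + d • matCLM (nilBlock ‖T‖)‖ := by
  set B := matCLM (nilBlock ‖T‖)
  obtain ⟨ω, hω, hcdω⟩ := Complex.exists_norm_eq_one_mul_eq_norm (conj c * d)
  have hTx : ‖T x‖ ≤ ‖T‖ := (T.le_opNorm x).trans_eq (by rw [hx, mul_one])
  obtain ⟨y, hy, hBy, hyBy⟩ := exists_inner_matCLM_nilBlock_eq (norm_nonneg (T x)) hTx hω
  have hre : (conj c * d * ⟪x, T x⟫).re ≤ (conj c * d * ⟪y, B y⟫).re :=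
    calc (conj c * d * ⟪x, T x⟫).re
        ≤ ‖conj c * d‖ * ‖⟪x, T x⟫‖ := (Complex.re_le_norm _).trans_eq (norm_mul _ _)
      _ ≤ ‖conj c * d‖ * (‖T x‖ * √(1 - (‖T x‖ / ‖T‖) ^ 2)) :=
        by gcongr; exact norm_inner_map_self_le_of_map_map_eq_zero T hx hTTx
      _ = (conj c * d * ⟪y, B y⟫).re := by
        rw [hyBy, ← mul_assoc (conj c * d), hcdω]
        norm_cast
  have hsq : ‖(c • 1 + d • T) x‖ ^ 2 ≤ ‖(c • 1 + d • B) y‖ ^ 2 := by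
    simp only [add_apply, smul_apply, one_apply_eq_self]
    rw [norm_smul_add_smul_sq, norm_smul_add_smul_sq, hx, hy, hBy, RCLike.re_to_complex,
      RCLike.re_to_complex]
    linarith
  calc ‖(c • 1 + d • T) x‖ ≤ ‖(c • 1 + d • B) y‖ :=
        (pow_le_pow_iff_left₀ (norm_nonneg _) (norm_nonneg _) two_ne_zero).mp hsq
    _ ≤ ‖c • 1 + d • B‖ := (ContinuousLinearMap.le_opNorm _ y).trans_eq (by rw [hy, mul_one])

theorem norm_smul_one_add_smul_le_nilBlock (T : E →L[ℂ] E) (hT : ∀ x, T (T x) = 0) (c d : ℂ) :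
    ‖c • 1 + d • T‖ ≤ ‖c • 1 + d • matCLM (nilBlock ‖T‖)‖ :=
  ContinuousLinearMap.opNorm_le_of_unit_norm (norm_nonneg _) fun _ hx =>
    norm_smul_one_add_smul_apply_le_nilBlock T hx (hT _) c d

theorem exists_inner_map_self_eq_nilBlock [FiniteDimensional ℂ E] [Nontrivial E] (T : E →L[ℂ] E)
    (hT : ∀ x, T (T x) = 0) {y : EuclideanSpace ℂ (Fin 2)} (hy : ‖y‖ = 1) :
    ∃ x : E, ‖x‖ = 1 ∧ ⟪x, T x⟫ = ⟪y, matCLM (nilBlock ‖T‖) y⟫ := by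
  obtain ⟨e, he, hTe⟩ := exists_norm_eq_one_norm_map_eq_opNorm T
  rcases eq_or_ne T 0 with rfl | hT0
  · exact ⟨e, he, by simp [inner_matCLM_nilBlock]⟩
  set a := ‖T‖
  have ha : a ≠ 0 := norm_ne_zero_iff.mpr hT0
  have hee : ⟪e, T e⟫ = 0 := by
    have := norm_inner_map_self_le_of_map_map_eq_zero T he (hT e)
    rwa [hTe, div_self ha, one_pow, sub_self, Real.sqrt_zero, mul_zero, norm_le_zero_iff] at this
  set g : E := (a⁻¹ : ℂ) • T e
  have hTe' : T e = (a : ℂ) • g := by simp [g, smul_smul, ha]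
  have hg : ‖g‖ = 1 := by
    rw [norm_smul, hTe, norm_inv, Complex.norm_real, Real.norm_of_nonneg (norm_nonneg T),
      inv_mul_cancel₀ ha]
  have hTg : T g = 0 := by simp [g, hT]
  have heg : ⟪e, g⟫ = 0 := by simp [g, hee]
  have hge : ⟪g, e⟫ = 0 := inner_eq_zero_symm.mp heg
  refine ⟨y 0 • g + y 1 • e, ?_, ?_⟩
  · rw [← hy, ← pow_left_inj₀ (norm_nonneg _) (norm_nonneg _) two_ne_zero,
      norm_smul_add_smul_sq, hg, he, hge, EuclideanSpace.norm_sq_eq, Fin.sum_univ_two]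
    simp
  · rw [inner_matCLM_nilBlock]
    simp [hTg, hTe', heg, inner_self_eq_norm_sq_to_K, hg]
    ring

end ComplexInnerProductSpace

section Matrix

variable {ι : Type} [Fintype ι] [DecidableEq ι]

theorem matCLM_apply_matCLM_apply_eq_zero {A : Matrix ι ι ℂ} (hA : A ^ 2 = 0)
    (x : EuclideanSpace ℂ ι) : matCLM A (matCLM A x) = 0 := by
  show (matCLM A * matCLM A) x = 0
  rw [matCLM, ← map_mul, ← sq, hA, map_zero]
  rfl

open Polynomial in
theorem Polynomial.aeval_eq_of_sq_eq_zero {R S : Type*} [CommSemiring R] [Semiring S]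
    [Algebra R S] {a : S} (ha : a ^ 2 = 0) (p : Polynomial R) :
    aeval a p = algebraMap R S (p.coeff 0) + p.coeff 1 • a := by
  conv_lhs => rw [← p.divX_mul_X_add, ← p.divX.divX_mul_X_add]
  simp only [map_add, map_mul, aeval_X, aeval_C, add_mul, mul_assoc]
  rw [← sq, ha, mul_zero, zero_add, coeff_divX, zero_add, ← Algebra.smul_def, add_comm]

theorem matCLM_aeval_of_sq_eq_zero {A : Matrix ι ι ℂ} (hA : A ^ 2 = 0) (p : Polynomial ℂ) :
    matCLM (Polynomial.aeval A p) = p.coeff 0 • 1 + p.coeff 1 • matCLM A := by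
  unfold matCLM
  rw [Polynomial.aeval_eq_of_sq_eq_zero hA, Algebra.algebraMap_eq_smul_one, map_add, map_smul,
    map_smul, map_one]

theorem norm_matCLM_aeval_le_nilBlock {A : Matrix ι ι ℂ} (hA : A ^ 2 = 0) (p : Polynomial ℂ) :
    ‖matCLM (Polynomial.aeval A p)‖ ≤ ‖matCLM (Polynomial.aeval (nilBlock ‖matCLM A‖) p)‖ := by
  rw [matCLM_aeval_of_sq_eq_zero hA, matCLM_aeval_of_sq_eq_zero (nilBlock_sq _)]
  exact norm_smul_one_add_smul_le_nilBlock _ (matCLM_apply_matCLM_apply_eq_zero hA) _ _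

theorem numRange_nilBlock_subset [Nonempty ι] {A : Matrix ι ι ℂ} (hA : A ^ 2 = 0) :
    numRange (nilBlock ‖matCLM A‖) ⊆ numRange A := by
  rintro _ ⟨y, hy, rfl⟩
  obtain ⟨x, hx, hxy⟩ :=
    exists_inner_map_self_eq_nilBlock (matCLM A) (matCLM_apply_matCLM_apply_eq_zero hA) hy
  exact ⟨x, hx, hxy.symm⟩

theorem isCompact_numRange (A : Matrix ι ι ℂ) : IsCompact (numRange A) := by
  have : numRange A = (fun x => ⟪x, matCLM A x⟫) '' Metric.sphere 0 1 := by
    ext; simp [numRange, eq_comm]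
  rw [this]
  exact (isCompact_sphere 0 1).image (continuous_id.inner (matCLM A).continuous)

end Matrix

theorem Real.biSup_le_biSup_of_subset {α : Type*} {f : α → ℝ} {s t : Set α} (hst : s ⊆ t)
    (hf : BddAbove (f '' t)) (hf0 : ∀ z, 0 ≤ f z) : ⨆ z ∈ s, f z ≤ ⨆ z ∈ t, f z := by
  have hbdd : BddAbove (⋃ z, Set.range fun _ : z ∈ t => f z) :=
    hf.mono (by rintro _ ⟨_, ⟨z, rfl⟩, ⟨hz, rfl⟩⟩; exact ⟨z, hz, rfl⟩)
  have hsup0 : 0 ≤ ⨆ z ∈ t, f z := Real.iSup_nonneg fun z => Real.iSup_nonneg fun _ => hf0 z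
  exact Real.iSup_le (fun z => Real.iSup_le (fun hz => le_ciSup₂ (f := fun z _ => f z) hbdd z
    (hst hz)) hsup0) hsup0

theorem crouzeix_sq_zero_general
    (h2 : ∀ B : Matrix (Fin 2) (Fin 2) ℂ, CrouzeixIneq B)
    {n : ℕ} (A : Matrix (Fin n) (Fin n) ℂ) (hA : A ^ 2 = 0) :
    CrouzeixIneq A := by
  intro p
  rcases isEmpty_or_nonempty (Fin n) with hn | hn
  · rw [Subsingleton.elim (matCLM (Polynomial.aeval A p)) 0, norm_zero]
    exact mul_nonneg zero_le_two
      (Real.iSup_nonneg fun _ => Real.iSup_nonneg fun _ => norm_nonneg _)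
  calc ‖matCLM (Polynomial.aeval A p)‖
      ≤ ‖matCLM (Polynomial.aeval (nilBlock ‖matCLM A‖) p)‖ := norm_matCLM_aeval_le_nilBlock hA p
    _ ≤ 2 * ⨆ z ∈ numRange (nilBlock ‖matCLM A‖), ‖p.eval z‖ := h2 _ p
    _ ≤ 2 * ⨆ z ∈ numRange A, ‖p.eval z‖ := by
      gcongr 2 * ?_
      exact Real.biSup_le_biSup_of_subset (numRange_nilBlock_subset hA)
        ((isCompact_numRange A).image p.continuous.norm).bddAbove fun _ => norm_nonneg _

/-- If every `1 × 1` and `2 × 2` matrix satisfies the Crouzeix inequality, then every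
`n × n` matrix `A` with `A² = 0` satisfies the Crouzeix inequality. -/
theorem crouzeix_sq_zero (h1 : ∀ B : Matrix (Fin 1) (Fin 1) ℂ, CrouzeixIneq B)
    (h2 : ∀ B : Matrix (Fin 2) (Fin 2) ℂ, CrouzeixIneq B)
    {n : ℕ} (A : Matrix (Fin n) (Fin n) ℂ) (hA : A ^ 2 = 0) :
    CrouzeixIneq A :=
  crouzeix_sq_zero_general h2 A hA
end
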